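/- arXiv:2603.17154 — 6 statements merged into one kernel-verified Lean document; each statement's English description precedes it below -/
import Mathlib

section
/- Let q be a prime power, let G ∈ F_q^{k×n} be a matrix of rank k with columns g_1,…,g_n, and let s_1, s_2 ≥ 1 with s_1 + s_2 = k. Then E_1(G) + E_2(G) ≥ k + min(s_1, s_2). -/
open Finset

/-- The `r`-th harmonic number `H_r = ∑_{i=1}^r 1/i`, as a real number (`H_0 = 0`). -/
noncomputable def harm (r : ℕ) : ℝ := ∑ i ∈ Finset.range r, (1 : ℝ) / (i + 1)

/-- The span of the columns of `G` indexed by the subset `S ⊆ {1,…,n}`. -/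
noncomputable def colSpan (F : Type*) [Field F] {k n : ℕ}
    (G : Matrix (Fin k) (Fin n) F) (S : Finset (Fin n)) : Submodule F (Fin k → F) :=
  Submodule.span F ((fun j => fun i => G i j) '' (S : Set (Fin n)))

/-- `α_V(s)`: the number of `s`-element subsets `S ⊆ {1,…,n}` whose columns span a
subspace containing the target subspace `V`. -/
noncomputable def alphaCount (F : Type*) [Field F] {k n : ℕ}
    (G : Matrix (Fin k) (Fin n) F) (V : Submodule F (Fin k → F)) (s : ℕ) : ℕ :=
  Nat.card {S : Finset (Fin n) // S.card = s ∧ V ≤ colSpan F G S}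

/-- The first file subspace `F₁ = span(e_1, …, e_{s₁}) ⊆ F_q^k`. -/
noncomputable def file1 (F : Type*) [Field F] (k s1 : ℕ) : Submodule F (Fin k → F) :=
  Submodule.span F {v : Fin k → F | ∃ i : Fin k, (i : ℕ) < s1 ∧ v = Pi.single i 1}

/-- The second file subspace `F₂ = span(e_{s₁+1}, …, e_k) ⊆ F_q^k`. -/
noncomputable def file2 (F : Type*) [Field F] (k s1 : ℕ) : Submodule F (Fin k → F) :=
  Submodule.span F {v : Fin k → F | ∃ i : Fin k, s1 ≤ (i : ℕ) ∧ v = Pi.single i 1}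

/-- The expected retrieval time `E(G, V) = n·H_n − ∑_{s=1}^{n−1} α_V(s)/C(n−1,s)`. -/
noncomputable def Etime (F : Type*) [Field F] {k n : ℕ}
    (G : Matrix (Fin k) (Fin n) F) (V : Submodule F (Fin k → F)) : ℝ :=
  (n : ℝ) * harm n -
    ∑ s ∈ Finset.Icc 1 (n - 1), (alphaCount F G V s : ℝ) / ((n - 1).choose s : ℝ)

/-!
Write `p_V(s) = α_V(s) / C(n,s)` for the fraction of `s`-sets of columns whose span contains `V`.
Since `C(n,s) / C(n-1,s) = n/(n-s) ≥ 1`, the retrieval time satisfies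
`E(V) ≥ ∑_{s<n} n/(n-s) · (1 - p_V(s)) ≥ ∑_{s<n} (1 - p_V(s))`.
Fewer than `dim V` columns never span `V`, so `p_i(s) = 0` for `s < min(s₁, s₂)`; and fewer than
`k` columns never span `F₁ ⊔ F₂ = F^k`, so `p_1(s) + p_2(s) ≤ 1` for `s < k`. As `k ≤ n` by the
rank assumption, the two sums together are at least `2 min(s₁, s₂) + (k - min(s₁, s₂))`.
-/

open Module

lemma mul_harm_eq_sum (n : ℕ) : n * harm n = ∑ s ∈ range n, (n : ℝ) / (n - s : ℕ) := by
  rw [harm, mul_sum, ← sum_range_reflect]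
  refine sum_congr rfl fun s hs => ?_
  rw [show n - s = n - 1 - s + 1 by grind]
  push_cast
  ring

lemma div_choose_pred_eq {n s : ℕ} (hs : s < n) (a : ℝ) :
    a / (n - 1).choose s = n / (n - s : ℕ) * (a / n.choose s) := by
  obtain ⟨m, rfl⟩ : ∃ m, n = m + 1 := ⟨n - 1, by omega⟩
  have h : (m.choose s : ℝ) * (m + 1 : ℕ) = (m + 1).choose s * (m + 1 - s : ℕ) := by
    exact_mod_cast Nat.choose_mul_succ_eq m s
  have h1 : (m.choose s : ℝ) ≠ 0 := by exact_mod_cast (Nat.choose_pos (by omega)).ne'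
  have h2 : ((m + 1).choose s : ℝ) ≠ 0 := by exact_mod_cast (Nat.choose_pos (by omega)).ne'
  have h3 : ((m + 1 - s : ℕ) : ℝ) ≠ 0 := by exact_mod_cast (by omega : m + 1 - s ≠ 0)
  rw [Nat.add_sub_cancel, div_mul_div_comm, eq_div_iff (mul_ne_zero h3 h2), div_mul_eq_mul_div,
    div_eq_iff h1]
  linear_combination (-a) * h

lemma sum_range_ite_lt {a n : ℕ} (ha : a ≤ n) :
    ∑ s ∈ range n, (if s < a then (1 : ℝ) else 0) = a := by
  rw [sum_boole, show {s ∈ range n | s < a} = range a by ext; simp; omega, card_range]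

section Recovery

variable (F : Type*) [Field F] {k n : ℕ} (G : Matrix (Fin k) (Fin n) F)

lemma finrank_colSpan_le_card (S : Finset (Fin n)) : finrank F (colSpan F G S) ≤ #S := by
  classical
  rw [colSpan, ← Finset.coe_image]
  exact (finrank_span_finset_le_card _).trans card_image_le

open scoped Classical in
lemma alphaCount_eq_card_filter (V : Submodule F (Fin k → F)) (s : ℕ) :
    alphaCount F G V s = #{S ∈ powersetCard s univ | V ≤ colSpan F G S} := by
  rw [alphaCount, Nat.card_eq_fintype_card, Fintype.card_subtype]
  congr 1
  ext S
  simp only [mem_filter, mem_univ, true_and, mem_powersetCard_univ]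

lemma alphaCount_le_choose (V : Submodule F (Fin k → F)) (s : ℕ) :
    alphaCount F G V s ≤ n.choose s := by
  classical
  rw [alphaCount_eq_card_filter]
  exact (card_filter_le _ _).trans_eq (by simp)

lemma alphaCount_eq_zero_of_lt_finrank {V : Submodule F (Fin k → F)} {s : ℕ}
    (hs : s < finrank F V) : alphaCount F G V s = 0 := by
  classical
  rw [alphaCount_eq_card_filter, card_eq_zero, filter_eq_empty_iff]
  intro S hS hVS
  have := (Submodule.finrank_mono hVS).trans (finrank_colSpan_le_card F G S)
  rw [(mem_powersetCard.1 hS).2] at this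
  omega

lemma alphaCount_add_alphaCount_le_choose {V W : Submodule F (Fin k → F)} (hVW : V ⊔ W = ⊤)
    {s : ℕ} (hs : s < k) : alphaCount F G V s + alphaCount F G W s ≤ n.choose s := by
  classical
  rw [alphaCount_eq_card_filter, alphaCount_eq_card_filter]
  set 𝒮 := powersetCard s (univ : Finset (Fin n))
  have hdisj : {S ∈ 𝒮 | W ≤ colSpan F G S} ⊆ {S ∈ 𝒮 | ¬V ≤ colSpan F G S} := fun S hS => by
    rw [mem_filter] at hS ⊢
    refine ⟨hS.1, fun hV => ?_⟩
    have htop : colSpan F G S = ⊤ := top_le_iff.1 (hVW ▸ sup_le hV hS.2)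
    have := finrank_colSpan_le_card F G S
    rw [htop, finrank_top, finrank_fin_fun, (mem_powersetCard.1 hS.1).2] at this
    omega
  calc _ ≤ #{S ∈ 𝒮 | V ≤ colSpan F G S} + #{S ∈ 𝒮 | ¬V ≤ colSpan F G S} := by gcongr
    _ = n.choose s := by rw [card_filter_add_card_filter_not, card_powersetCard, card_fin]

noncomputable def recoveryProb (V : Submodule F (Fin k → F)) (s : ℕ) : ℝ :=
  alphaCount F G V s / n.choose s

lemma recoveryProb_le_one (V : Submodule F (Fin k → F)) (s : ℕ) : recoveryProb F G V s ≤ 1 :=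
  div_le_one_of_le₀ (by exact_mod_cast alphaCount_le_choose F G V s) (Nat.cast_nonneg _)

lemma recoveryProb_eq_zero_of_lt_finrank {V : Submodule F (Fin k → F)} {s : ℕ}
    (hs : s < finrank F V) : recoveryProb F G V s = 0 := by
  rw [recoveryProb, alphaCount_eq_zero_of_lt_finrank F G hs, Nat.cast_zero, zero_div]

lemma recoveryProb_add_recoveryProb_le_one {V W : Submodule F (Fin k → F)} (hVW : V ⊔ W = ⊤)
    {s : ℕ} (hs : s < k) : recoveryProb F G V s + recoveryProb F G W s ≤ 1 := by
  rw [recoveryProb, recoveryProb, ← add_div]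
  exact div_le_one_of_le₀ (by exact_mod_cast alphaCount_add_alphaCount_le_choose F G hVW hs)
    (Nat.cast_nonneg _)

lemma ite_lt_add_ite_lt_le_one_sub_add_one_sub {V W : Submodule F (Fin k → F)} (hVW : V ⊔ W = ⊤)
    {m : ℕ} (hV : m ≤ finrank F V) (hW : m ≤ finrank F W) (s : ℕ) :
    (if s < m then (1 : ℝ) else 0) + (if s < k then 1 else 0)
      ≤ (1 - recoveryProb F G V s) + (1 - recoveryProb F G W s) := by
  have hV1 := recoveryProb_le_one F G V s
  have hW1 := recoveryProb_le_one F G W s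
  by_cases hm : s < m
  · rw [if_pos hm, recoveryProb_eq_zero_of_lt_finrank F G (hm.trans_le hV),
      recoveryProb_eq_zero_of_lt_finrank F G (hm.trans_le hW)]
    split_ifs <;> norm_num
  · rw [if_neg hm]
    split_ifs with hk
    · linarith [recoveryProb_add_recoveryProb_le_one F G hVW hk]
    · linarith

lemma sum_one_sub_recoveryProb_le_Etime (V : Submodule F (Fin k → F)) :
    ∑ s ∈ range n, (1 - recoveryProb F G V s) ≤ Etime F G V := by
  have hIcc : ∑ s ∈ Icc 1 (n - 1), (alphaCount F G V s : ℝ) / (n - 1).choose s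
      ≤ ∑ s ∈ range n, (alphaCount F G V s : ℝ) / (n - 1).choose s :=
    sum_le_sum_of_subset_of_nonneg (fun s hs => by grind) fun _ _ _ => by positivity
  have hterm : ∀ s ∈ range n, 1 - recoveryProb F G V s
      ≤ n / (n - s : ℕ) - (alphaCount F G V s : ℝ) / (n - 1).choose s := fun s hs => by
    have hs := mem_range.1 hs
    have hratio : (1 : ℝ) ≤ n / (n - s : ℕ) :=
      (one_le_div (by exact_mod_cast Nat.sub_pos_of_lt hs)).2 (by exact_mod_cast Nat.sub_le n s)
    rw [div_choose_pred_eq hs, ← recoveryProb, ← mul_one_sub]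
    exact le_mul_of_one_le_left (sub_nonneg.2 (recoveryProb_le_one F G V s)) hratio
  rw [Etime, mul_harm_eq_sum]
  calc _ ≤ ∑ s ∈ range n, ((n : ℝ) / (n - s : ℕ) - (alphaCount F G V s : ℝ) / (n - 1).choose s) :=
        sum_le_sum hterm
    _ ≤ _ := by rw [sum_sub_distrib]; linarith

end Recovery

lemma finrank_span_single_one (F : Type*) [Field F] {ι : Type*} [Fintype ι] [DecidableEq ι]
    (P : ι → Prop) [DecidablePred P] :
    finrank F (Submodule.span F {v : ι → F | ∃ i, P i ∧ v = Pi.single i 1}) = #{i | P i} := by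
  have hrange : {v : ι → F | ∃ i, P i ∧ v = Pi.single i 1}
      = Set.range (Pi.basisFun F ι ∘ Subtype.val : {i // P i} → ι → F) := by
    ext v
    simp [eq_comm]
  rw [hrange, finrank_span_eq_card ((Pi.basisFun F ι).linearIndependent.comp _
    Subtype.val_injective), Fintype.card_subtype]

lemma finrank_file1 (F : Type*) [Field F] (k s1 : ℕ) : finrank F (file1 F k s1) = min k s1 := by
  classical
  rw [file1, finrank_span_single_one, Fin.card_filter_val_lt]

lemma finrank_file2 (F : Type*) [Field F] (k s1 : ℕ) : finrank F (file2 F k s1) = k - min k s1 := by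
  classical
  have h := card_filter_add_card_filter_not (s := univ) (fun i : Fin k => (i : ℕ) < s1)
  simp only [not_lt, card_univ, Fintype.card_fin, Fin.card_filter_val_lt] at h
  rw [file2, finrank_span_single_one]
  omega

lemma file1_sup_file2 (F : Type*) [Field F] (k s1 : ℕ) : file1 F k s1 ⊔ file2 F k s1 = ⊤ := by
  rw [eq_top_iff, ← (Pi.basisFun F (Fin k)).span_eq, Submodule.span_le]
  rintro _ ⟨i, rfl⟩
  rcases lt_or_ge (i : ℕ) s1 with hi | hi
  · exact Submodule.mem_sup_left (Submodule.subset_span ⟨i, hi, by simp⟩)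
  · exact Submodule.mem_sup_right (Submodule.subset_span ⟨i, hi, by simp⟩)

theorem stmt0_general (k n s1 s2 : ℕ)
    (F : Type*) [Field F]
    (G : Matrix (Fin k) (Fin n) F) (hrank : G.rank = k)
    (hk : s1 + s2 = k) :
    Etime F G (file1 F k s1) + Etime F G (file2 F k s1) ≥
      (k : ℝ) + ((min s1 s2 : ℕ) : ℝ) := by
  have hkn : k ≤ n := hrank ▸ G.rank_le_card_width.trans_eq (Fintype.card_fin n)
  have h1 : min s1 s2 ≤ finrank F (file1 F k s1) := by rw [finrank_file1]; omega
  have h2 : min s1 s2 ≤ finrank F (file2 F k s1) := by rw [finrank_file2]; omega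
  rw [ge_iff_le]
  calc (k : ℝ) + ((min s1 s2 : ℕ) : ℝ)
      = ∑ s ∈ range n, ((if s < min s1 s2 then (1 : ℝ) else 0) + (if s < k then 1 else 0)) := by
        rw [sum_add_distrib, sum_range_ite_lt (by omega), sum_range_ite_lt hkn, add_comm]
    _ ≤ ∑ s ∈ range n, ((1 - recoveryProb F G (file1 F k s1) s)
          + (1 - recoveryProb F G (file2 F k s1) s)) :=
        sum_le_sum fun s _ => ite_lt_add_ite_lt_le_one_sub_add_one_sub F G
          (file1_sup_file2 F k s1) h1 h2 s
    _ ≤ _ := by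
        rw [sum_add_distrib]
        exact add_le_add (sum_one_sub_recoveryProb_le_Etime F G _)
          (sum_one_sub_recoveryProb_le_Etime F G _)

/-- For any rank-`k` code `G` and partition `s₁ + s₂ = k` with `s₁, s₂ ≥ 1`,
`E₁(G) + E₂(G) ≥ k + min(s₁, s₂)`. -/
theorem stmt0 (q k n s1 s2 : ℕ) (hq : IsPrimePow q)
    (F : Type*) [Field F] [Fintype F] (hF : Fintype.card F = q)
    (G : Matrix (Fin k) (Fin n) F) (hrank : G.rank = k)
    (hs1 : 1 ≤ s1) (hs2 : 1 ≤ s2) (hk : s1 + s2 = k) :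
    Etime F G (file1 F k s1) + Etime F G (file2 F k s1) ≥
      (k : ℝ) + ((min s1 s2 : ℕ) : ℝ) :=
  stmt0_general k n s1 s2 F G hrank hk
end

section
/- Let n, k, s_1, s_2 be integers with s_1, s_2 ≥ 1, s_1 + s_2 = k, and max(s_1,s_2) ≤ k−1 ≤ n−1. For an integer s* with max(s_1,s_2) ≤ s* ≤ k−1, define A_i(s*) = Σ_{s=s_i}^{s*} n/(n−s) and β_i = n·(H_n − H_{n−s_i}) for i ∈ {1,2}. If real numbers E_1, E_2 satisfy E_i ≥ β_i for i ∈ {1,2} and satisfy the cut at s* = k−1, namely (E_1 − β_1)/A_1(k−1) + (E_2 − β_2)/A_2(k−1) ≥ 1, then for every integer s' with max(s_1,s_2) ≤ s' ≤ k−1 the cut at s' also holds: (E_1 − β_1)/A_1(s') + (E_2 − β_2)/A_2(s') ≥ 1. That is, the cut at s* = k−1 dominates all other cuts in the family. -/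
open Finset

/-- `A_i(s*) = ∑_{s=s_i}^{s*} n/(n−s)`. -/
noncomputable def Acut (n si sstar : ℕ) : ℝ :=
  ∑ s ∈ Finset.Icc si sstar, (n : ℝ) / ((n : ℝ) - s)

/-- `β_i = n·(H_n − H_{n−s_i})`. -/
noncomputable def betaLB (n si : ℕ) : ℝ := (n : ℝ) * (harm n - harm (n - si))

/-- The cut at `s* = k−1` dominates all other cuts: if `(E₁, E₂)` satisfies
`E_i ≥ β_i` and the cut at `k−1`, then it satisfies the cut at every
`s'` with `max(s₁,s₂) ≤ s' ≤ k−1`. -/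
theorem stmt5 (n k s1 s2 : ℕ) (hs1 : 1 ≤ s1) (hs2 : 1 ≤ s2) (hk : s1 + s2 = k)
    (hmax : max s1 s2 ≤ k - 1) (hkn : k - 1 ≤ n - 1)
    (E1 E2 : ℝ) (hb1 : betaLB n s1 ≤ E1) (hb2 : betaLB n s2 ≤ E2)
    (hcut : (E1 - betaLB n s1) / Acut n s1 (k - 1) +
      (E2 - betaLB n s2) / Acut n s2 (k - 1) ≥ 1) :
    ∀ s' : ℕ, max s1 s2 ≤ s' → s' ≤ k - 1 →
      (E1 - betaLB n s1) / Acut n s1 s' + (E2 - betaLB n s2) / Acut n s2 s' ≥ 1 := by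
  intro s' hlo hhi
  have hk2 : 2 ≤ k := by omega
  have hkn' : k ≤ n := by omega
  have hpos : ∀ si s'', 1 ≤ si → si ≤ s'' → s'' ≤ k - 1 → 0 < Acut n si s'' := by
    intro si s'' h1 h2 h3
    apply Finset.sum_pos
    · intro s hs
      simp only [Finset.mem_Icc] at hs
      have hsn : s < n := by omega
      have h0n : (0:ℝ) < n := by exact_mod_cast (by omega : 0 < n)
      exact div_pos h0n (by exact_mod_cast sub_pos.mpr (by exact_mod_cast hsn : (s:ℝ) < n))
    · exact Finset.nonempty_Icc.mpr h2
  have hmono : ∀ si, 1 ≤ si → si ≤ s' → Acut n si s' ≤ Acut n si (k - 1) := by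
    intro si h1 h2
    apply Finset.sum_le_sum_of_subset_of_nonneg (Finset.Icc_subset_Icc_right hhi)
    intro s hs _
    simp only [Finset.mem_Icc] at hs
    have hsn : s < n := by omega
    have h0n : (0:ℝ) < n := by exact_mod_cast (by omega : 0 < n)
    exact le_of_lt (div_pos h0n (sub_pos.mpr (by exact_mod_cast hsn : (s:ℝ) < n)))
  have hs1' : s1 ≤ s' := le_trans (le_max_left _ _) hlo
  have hs2' : s2 ≤ s' := le_trans (le_max_right _ _) hlo
  have p1 := hpos s1 s' hs1 hs1' hhi
  have p2 := hpos s2 s' hs2 hs2' hhi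
  have h1 : (E1 - betaLB n s1) / Acut n s1 (k-1) ≤ (E1 - betaLB n s1) / Acut n s1 s' := by
    apply div_le_div_of_nonneg_left (by linarith) p1 (hmono s1 hs1 hs1')
  have h2 : (E2 - betaLB n s2) / Acut n s2 (k-1) ≤ (E2 - betaLB n s2) / Acut n s2 s' := by
    apply div_le_div_of_nonneg_left (by linarith) p2 (hmono s2 hs2 hs2')
  linarith
end

section
/- Let q be a prime power, let G ∈ F_q^{k×n} be a matrix of rank k, and let s_1, s_2 ≥ 1 with s_1 + s_2 = k. Then for each i ∈ {1,2}, E_i(G) ≥ n·(H_n − H_{n−s_i}). -/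
open Finset

lemma alphaCount_le (F : Type*) [Field F] {k n : ℕ}
    (G : Matrix (Fin k) (Fin n) F) (V : Submodule F (Fin k → F)) (s : ℕ) :
    alphaCount F G V s ≤ n.choose s := by
  classical
  have h2 : Nat.card {S : Finset (Fin n) // S.card = s ∧ V ≤ colSpan F G S}
      ≤ Nat.card {S : Finset (Fin n) // S.card = s} := by
    apply Nat.card_le_card_of_injective (fun x => ⟨x.1, x.2.1⟩)
    intro a b hab
    simp only [Subtype.mk.injEq] at hab
    exact Subtype.ext hab
  have h3 : Nat.card {S : Finset (Fin n) // S.card = s} = n.choose s := by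
    rw [Nat.card_eq_fintype_card, Fintype.card_finset_len, Fintype.card_fin]
  rw [alphaCount]
  omega

lemma finrank_colSpan_le (F : Type*) [Field F] {k n : ℕ}
    (G : Matrix (Fin k) (Fin n) F) (S : Finset (Fin n)) :
    Module.finrank F (colSpan F G S) ≤ S.card := by
  classical
  have h : ((S.image (fun j => fun i => G i j) : Finset (Fin k → F)) : Set (Fin k → F))
      = (fun j => fun i => G i j) '' (S : Set (Fin n)) := Finset.coe_image
  rw [colSpan, ← h]
  exact le_trans (finrank_span_finset_le_card _) (Finset.card_image_le)

lemma alphaCount_eq_zero (F : Type*) [Field F] {k n : ℕ}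
    (G : Matrix (Fin k) (Fin n) F) (V : Submodule F (Fin k → F)) {s d : ℕ}
    (hd : d ≤ Module.finrank F V) (hs : s < d) :
    alphaCount F G V s = 0 := by
  rw [alphaCount, Nat.card_eq_zero]
  left
  constructor
  rintro ⟨S, hcard, hle⟩
  have h1 : Module.finrank F V ≤ Module.finrank F (colSpan F G S) :=
    Submodule.finrank_mono hle
  have h2 := finrank_colSpan_le F G S
  omega

lemma choose_ratio {n s : ℕ} (hs : s ≤ n - 1) (hn : 1 ≤ n) :
    (n.choose s : ℝ) / ((n - 1).choose s : ℝ) = (n : ℝ) / ((n : ℝ) - s) := by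
  obtain ⟨m, rfl⟩ : ∃ m, n = m + 1 := ⟨n - 1, by omega⟩
  simp only [Nat.add_sub_cancel] at hs ⊢
  have h2 := Nat.add_one_mul_choose_eq m s
  have h1 := Nat.choose_succ_right_eq (m + 1) s
  have key : (m + 1) * m.choose s = (m + 1).choose s * (m + 1 - s) := h2.trans h1
  have hc : (0 : ℝ) < (m.choose s : ℝ) := by
    exact_mod_cast Nat.choose_pos hs
  have hsm : (s : ℝ) ≤ m := by exact_mod_cast hs
  have hms : (0 : ℝ) < ((m : ℝ) + 1) - s := by linarith
  have hn' : ((m + 1 : ℕ) : ℝ) = (m : ℝ) + 1 := by push_cast; ring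
  rw [hn', div_eq_div_iff hc.ne' hms.ne']
  have key' : ((m + 1 : ℕ) : ℝ) * (m.choose s : ℝ)
      = ((m + 1).choose s : ℝ) * ((m + 1 - s : ℕ) : ℝ) := by exact_mod_cast key
  have hcast : ((m + 1 - s : ℕ) : ℝ) = ((m : ℝ) + 1) - s := by
    have hs' : s ≤ m + 1 := by omega
    push_cast [hs']; ring
  rw [hcast, hn'] at key'
  linarith [key']

lemma sum_tail (n d : ℕ) (hd : 1 ≤ d) :
    ∑ s ∈ Finset.Icc d (n - 1), (n : ℝ) / ((n : ℝ) - s) = (n : ℝ) * harm (n - d) := by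
  rw [harm, Finset.mul_sum]
  apply Finset.sum_nbij' (fun s => n - 1 - s) (fun t => n - 1 - t)
  · intro s hs
    simp only [Finset.mem_Icc] at hs
    simp only [Finset.mem_range]
    omega
  · intro t ht
    simp only [Finset.mem_range] at ht
    simp only [Finset.mem_Icc]
    omega
  · intro s hs
    simp only [Finset.mem_Icc] at hs
    omega
  · intro t ht
    simp only [Finset.mem_range] at ht
    omega
  · intro s hs
    simp only [Finset.mem_Icc] at hs
    have h1 : ((n - 1 - s : ℕ) : ℝ) + 1 = (n : ℝ) - s := by
      have hns : n - 1 - s = n - (1 + s) := by omega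
      have h2 : ((n - (1 + s) : ℕ) : ℝ) = (n : ℝ) - (1 + s) := by
        have hle : 1 + s ≤ n := by omega
        push_cast [hle]; ring
      rw [hns, h2]; push_cast; ring
    rw [h1, mul_one_div]

lemma Etime_ge (F : Type*) [Field F] {k n : ℕ}
    (G : Matrix (Fin k) (Fin n) F) (V : Submodule F (Fin k → F)) (d : ℕ)
    (hd1 : 1 ≤ d) (hdim : d ≤ Module.finrank F V) :
    Etime F G V ≥ (n : ℝ) * (harm n - harm (n - d)) := by
  rw [Etime, mul_sub, ge_iff_le, sub_le_sub_iff_left]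
  calc ∑ s ∈ Finset.Icc 1 (n - 1), (alphaCount F G V s : ℝ) / ((n - 1).choose s : ℝ)
      ≤ ∑ s ∈ Finset.Icc 1 (n - 1),
          (if d ≤ s then (n : ℝ) / ((n : ℝ) - s) else 0) := by
        apply Finset.sum_le_sum
        intro s hs
        simp only [Finset.mem_Icc] at hs
        by_cases hds : d ≤ s
        · rw [if_pos hds, ← choose_ratio hs.2 (by omega)]
          gcongr
          exact_mod_cast alphaCount_le F G V s
        · rw [if_neg hds]
          rw [alphaCount_eq_zero F G V hdim (by omega)]
          simp
    _ = ∑ s ∈ Finset.Icc d (n - 1), (n : ℝ) / ((n : ℝ) - s) := by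
        rw [← Finset.sum_filter]
        congr 1
        ext s
        simp only [Finset.mem_filter, Finset.mem_Icc]
        omega
    _ = (n : ℝ) * harm (n - d) := sum_tail n d hd1

lemma finrank_file1_ge (F : Type*) [Field F] (k s1 : ℕ) (h : s1 ≤ k) :
    s1 ≤ Module.finrank F (file1 F k s1) := by
  classical
  set b : Fin s1 → (Fin k → F) := fun j => Pi.single (Fin.castLE h j) 1 with hb
  have hind : LinearIndependent F b := by
    have := (Pi.basisFun F (Fin k)).linearIndependent.comp (Fin.castLE h)
      (Fin.castLE_injective h)
    convert this using 1
    funext j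
    simp [hb, Function.comp, Pi.basisFun_apply]
  have hsub : Submodule.span F (Set.range b) ≤ file1 F k s1 := by
    rw [Submodule.span_le]
    rintro v ⟨j, rfl⟩
    apply Submodule.subset_span
    exact ⟨Fin.castLE h j, by simpa using j.isLt, rfl⟩
  have hcard := finrank_span_eq_card hind
  rw [Fintype.card_fin] at hcard
  have hmono : Module.finrank F (Submodule.span F (Set.range b))
      ≤ Module.finrank F (file1 F k s1) := Submodule.finrank_mono hsub
  omega

lemma finrank_file2_ge (F : Type*) [Field F] (k s1 s2 : ℕ) (h : s1 + s2 = k) :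
    s2 ≤ Module.finrank F (file2 F k s1) := by
  classical
  have hlt : ∀ j : Fin s2, s1 + (j : ℕ) < k := fun j => by omega
  set b : Fin s2 → (Fin k → F) := fun j => Pi.single (⟨s1 + j, hlt j⟩ : Fin k) 1 with hb
  have hinj : Function.Injective (fun j : Fin s2 => (⟨s1 + j, hlt j⟩ : Fin k)) := by
    intro a b hab
    simp only [Fin.mk.injEq, add_right_inj] at hab
    exact Fin.ext hab
  have hind : LinearIndependent F b := by
    have := (Pi.basisFun F (Fin k)).linearIndependent.comp _ hinj
    convert this using 1
    funext j
    simp [hb, Function.comp, Pi.basisFun_apply]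
  have hsub : Submodule.span F (Set.range b) ≤ file2 F k s1 := by
    rw [Submodule.span_le]
    rintro v ⟨j, rfl⟩
    apply Submodule.subset_span
    exact ⟨⟨s1 + j, hlt j⟩, by simp, rfl⟩
  have hcard := finrank_span_eq_card hind
  rw [Fintype.card_fin] at hcard
  have hmono : Module.finrank F (Submodule.span F (Set.range b))
      ≤ Module.finrank F (file2 F k s1) := Submodule.finrank_mono hsub
  omega

/-- For any rank-`k` code `G` and each `i ∈ {1,2}`, `E_i(G) ≥ n·(H_n − H_{n−s_i})`. -/
theorem stmt6 (q k n s1 s2 : ℕ) (hq : IsPrimePow q)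
    (F : Type*) [Field F] [Fintype F] (hF : Fintype.card F = q)
    (G : Matrix (Fin k) (Fin n) F) (hrank : G.rank = k)
    (hs1 : 1 ≤ s1) (hs2 : 1 ≤ s2) (hk : s1 + s2 = k) :
    Etime F G (file1 F k s1) ≥ (n : ℝ) * (harm n - harm (n - s1)) ∧
      Etime F G (file2 F k s1) ≥ (n : ℝ) * (harm n - harm (n - s2)) := by
  constructor
  · exact Etime_ge F G _ s1 hs1 (finrank_file1_ge F k s1 (by omega))
  · exact Etime_ge F G _ s2 hs2 (finrank_file2_ge F k s1 s2 hk)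
end

section
/- Let q be a prime power, let k ≥ 2, let s_1, s_2 ≥ 1 with s_1 + s_2 = k, and let G = I_k be the k×k identity matrix over F_q (so n = k). Then for each i ∈ {1,2}, E_i(G) = k·H_{s_i}. Equivalently, k·H_k − Σ_{s=s_i}^{k−1} C(k−s_i, s−s_i)/C(k−1, s) = k·H_{s_i}. -/
open Finset

/-!
For `G = I` the columns indexed by `S` span the coordinate subspace of `S`, which contains the
span of `e_i, i ∈ A` exactly when `A ⊆ S`; so `α(s) = C(k - |A|, s - |A|)` for `s ≥ |A|` and `0`
otherwise. With `m = k - 1` it remains to show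
`∑_{s=a}^{m} C(m+1-a, s-a) / C(m, s) = (m+1) (H_{m+1} - H_a)`, by downward induction on `a`:
Pascal's rule on the numerator splits off `∑_{s=a}^{m} C(m-a, s-a) / C(m, s)`, whose terms are
`C(s, a) / C(m, a)`, so by the hockey-stick identity it equals
`C(m+1, a+1) / C(m, a) = (m+1) / (a+1)`.
-/

theorem harm_succ (a : ℕ) : harm (a + 1) = harm a + 1 / (a + 1) := by
  simp [harm, sum_range_succ]

namespace Nat

theorem cast_choose_sub_div_cast_choose {m s a : ℕ} (has : a ≤ s) (hsm : s ≤ m) :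
    ((m - a).choose (s - a) : ℝ) / m.choose s = (s.choose a : ℝ) / m.choose a := by
  have hms : (m.choose s : ℝ) ≠ 0 := mod_cast (choose_pos hsm).ne'
  have hma : (m.choose a : ℝ) ≠ 0 := mod_cast (choose_pos (has.trans hsm)).ne'
  rw [div_eq_div_iff hms hma]
  exact_mod_cast by linarith [choose_mul (n := m) has]

theorem cast_choose_succ_div_cast_choose {m a : ℕ} (ham : a ≤ m) :
    ((m + 1).choose (a + 1) : ℝ) / m.choose a = (m + 1) / (a + 1) := by
  have hma : (m.choose a : ℝ) ≠ 0 := mod_cast (choose_pos ham).ne'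
  rw [div_eq_div_iff hma (by positivity)]
  exact_mod_cast (add_one_mul_choose_eq m a).symm

theorem sum_Icc_cast_choose_sub_div_cast_choose {m a : ℕ} (ham : a ≤ m) :
    ∑ s ∈ Icc a m, ((m - a).choose (s - a) : ℝ) / m.choose s = (m + 1) / (a + 1) := by
  calc ∑ s ∈ Icc a m, ((m - a).choose (s - a) : ℝ) / m.choose s
      = (∑ s ∈ Icc a m, (s.choose a : ℝ)) / m.choose a := by
        rw [sum_div]
        refine sum_congr rfl fun s hs => ?_
        rw [mem_Icc] at hs
        exact cast_choose_sub_div_cast_choose hs.1 hs.2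
    _ = (m + 1) / (a + 1) := by
        rw [← cast_sum, sum_Icc_choose, cast_choose_succ_div_cast_choose ham]

theorem sum_Icc_cast_choose_succ_sub_div_cast_choose_eq_add {m a : ℕ} (ham : a ≤ m) :
    ∑ s ∈ Icc a m, ((m + 1 - a).choose (s - a) : ℝ) / m.choose s
      = (m + 1) / (a + 1) +
        ∑ s ∈ Icc (a + 1) m, ((m + 1 - (a + 1)).choose (s - (a + 1)) : ℝ) / m.choose s := by
  have hpascal : ∀ s ∈ Ioc a m, ((m + 1 - a).choose (s - a) : ℝ) / m.choose s
      = (m - a).choose (s - a) / m.choose s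
        + (m + 1 - (a + 1)).choose (s - (a + 1)) / m.choose s := by
    intro s hs
    rw [mem_Ioc] at hs
    rw [show m + 1 - a = m - a + 1 by omega, show s - a = s - (a + 1) + 1 by omega,
      choose_succ_succ', Nat.add_sub_add_right]
    push_cast
    ring
  rw [← sum_Icc_cast_choose_sub_div_cast_choose ham, ← add_sum_Ioc_eq_sum_Icc ham,
    ← add_sum_Ioc_eq_sum_Icc ham, sum_congr rfl hpascal, sum_add_distrib,
    Icc_add_one_left_eq_Ioc]
  simp only [Nat.sub_self, choose_zero_right]
  ring

theorem sum_Icc_cast_choose_succ_sub_div_cast_choose {m a : ℕ} (ham : a ≤ m + 1) :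
    ∑ s ∈ Icc a m, ((m + 1 - a).choose (s - a) : ℝ) / m.choose s
      = (m + 1) * (harm (m + 1) - harm a) := by
  obtain ⟨d, hd⟩ : ∃ d, m + 1 = a + d := ⟨m + 1 - a, by omega⟩
  induction d generalizing a with
  | zero =>
    obtain rfl : a = m + 1 := hd.symm
    simp
  | succ d ih =>
    rw [sum_Icc_cast_choose_succ_sub_div_cast_choose_eq_add (by omega), ih (by omega) (by omega),
      harm_succ a]
    field_simp
    ring

end Nat

theorem mul_harm_sub_sum_Icc_cast_choose_sub_div_cast_choose {n a : ℕ} (hn : 0 < n)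
    (han : a ≤ n) :
    (n : ℝ) * harm n - ∑ s ∈ Icc a (n - 1), ((n - a).choose (s - a) : ℝ) / (n - 1).choose s =
      n * harm a := by
  obtain ⟨m, rfl⟩ : ∃ m, n = m + 1 := ⟨n - 1, by omega⟩
  rw [Nat.add_sub_cancel, Nat.sum_Icc_cast_choose_succ_sub_div_cast_choose han]
  push_cast
  ring

theorem Module.Basis.span_image_le_span_image_iff {ι R M : Type*} [Semiring R] [Nontrivial R]
    [AddCommMonoid M] [Module R M] (b : Module.Basis ι R M) {s t : Set ι} :
    Submodule.span R (b '' s) ≤ Submodule.span R (b '' t) ↔ s ⊆ t := by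
  rw [Submodule.span_le, Set.image_subset_iff]
  simp only [Set.subset_def, Set.mem_preimage, SetLike.mem_coe, b.self_mem_span_image]

theorem Finset.natCard_card_eq_and_superset {ι : Type*} [Fintype ι] [DecidableEq ι]
    (A : Finset ι) (s : ℕ) :
    Nat.card {S : Finset ι // #S = s ∧ A ⊆ S} =
      if #A ≤ s then (Fintype.card ι - #A).choose (s - #A) else 0 := by
  rw [Nat.card_eq_fintype_card, Fintype.card_subtype]
  split_ifs with h
  · rw [← card_compl, ← card_powersetCard]
    refine card_nbij' (· \ A) (· ∪ A) ?_ ?_ ?_ ?_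
    · intro S hS
      simp only [coe_filter, mem_univ, true_and, Set.mem_ofPred_eq, mem_coe,
        mem_powersetCard] at hS ⊢
      exact ⟨fun x hx => mem_compl.2 (mem_sdiff.1 hx).2, by rw [card_sdiff_of_subset hS.2, hS.1]⟩
    · intro T hT
      simp only [coe_filter, mem_univ, true_and, Set.mem_ofPred_eq, mem_coe,
        mem_powersetCard] at hT ⊢
      have hdisj : Disjoint T A := disjoint_left.2 fun x hx => mem_compl.1 (hT.1 hx)
      exact ⟨by rw [card_union_of_disjoint hdisj]; omega, subset_union_right⟩
    · intro S hS
      simp only [coe_filter, mem_univ, true_and, Set.mem_ofPred_eq] at hS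
      exact sdiff_union_of_subset hS.2
    · intro T hT
      simp only [mem_coe, mem_powersetCard] at hT
      exact union_sdiff_cancel_right (disjoint_left.2 fun x hx => mem_compl.1 (hT.1 hx))
  · rw [card_eq_zero, filter_eq_empty_iff]
    rintro S - ⟨rfl, hAS⟩
    exact h (card_le_card hAS)

theorem colSpan_one (F : Type*) [Field F] {n : ℕ} (S : Finset (Fin n)) :
    colSpan F (1 : Matrix (Fin n) (Fin n) F) S = Submodule.span F (Pi.basisFun F (Fin n) '' S) := by
  unfold colSpan
  congr
  ext j i
  simp [Matrix.one_apply, Pi.single_apply, eq_comm]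

theorem alphaCount_one_span_basisFun (F : Type*) [Field F] {n : ℕ} (A : Finset (Fin n)) (s : ℕ) :
    alphaCount F (1 : Matrix (Fin n) (Fin n) F) (Submodule.span F (Pi.basisFun F (Fin n) '' A)) s =
      if #A ≤ s then (n - #A).choose (s - #A) else 0 := by
  simp only [alphaCount, colSpan_one, Module.Basis.span_image_le_span_image_iff, coe_subset]
  rw [natCard_card_eq_and_superset, Fintype.card_fin]

theorem Etime_one_span_basisFun (F : Type*) [Field F] {n : ℕ} {A : Finset (Fin n)}
    (hA : A.Nonempty) :
    Etime F (1 : Matrix (Fin n) (Fin n) F) (Submodule.span F (Pi.basisFun F (Fin n) '' A)) =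
      n * harm #A := by
  have hA1 : 1 ≤ #A := hA.card_pos
  have hAn : #A ≤ n := (card_le_univ A).trans_eq (Fintype.card_fin n)
  have hsupport : (Icc 1 (n - 1)).filter (#A ≤ ·) = Icc #A (n - 1) := by
    ext s
    simp only [mem_filter, mem_Icc]
    omega
  rw [← mul_harm_sub_sum_Icc_cast_choose_sub_div_cast_choose (by omega) hAn, Etime,
    ← hsupport, sum_filter]
  simp only [alphaCount_one_span_basisFun, Nat.cast_ite, Nat.cast_zero, ite_div, zero_div]

theorem file1_eq_span_basisFun (F : Type*) [Field F] (k s1 : ℕ) :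
    file1 F k s1 =
      Submodule.span F (Pi.basisFun F (Fin k) '' ↑({i | (i : ℕ) < s1} : Finset (Fin k))) := by
  unfold file1
  congr
  ext v
  simp [eq_comm]

theorem file2_eq_span_basisFun (F : Type*) [Field F] (k s1 : ℕ) :
    file2 F k s1 =
      Submodule.span F (Pi.basisFun F (Fin k) '' ↑({i | s1 ≤ (i : ℕ)} : Finset (Fin k))) := by
  unfold file2
  congr
  ext v
  simp [eq_comm]

theorem stmt11_general (k s1 s2 : ℕ)
    (F : Type*) [Field F]
    (hs1 : 1 ≤ s1) (hs2 : 1 ≤ s2) (hk : s1 + s2 = k) :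
    Etime F (1 : Matrix (Fin k) (Fin k) F) (file1 F k s1) = (k : ℝ) * harm s1 ∧
    Etime F (1 : Matrix (Fin k) (Fin k) F) (file2 F k s1) = (k : ℝ) * harm s2 ∧
    (k : ℝ) * harm k -
        ∑ s ∈ Finset.Icc s1 (k - 1), ((k - s1).choose (s - s1) : ℝ) / ((k - 1).choose s : ℝ) =
      (k : ℝ) * harm s1 ∧
    (k : ℝ) * harm k -
        ∑ s ∈ Finset.Icc s2 (k - 1), ((k - s2).choose (s - s2) : ℝ) / ((k - 1).choose s : ℝ) =
      (k : ℝ) * harm s2 := by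
  have hcard1 : #({i | (i : ℕ) < s1} : Finset (Fin k)) = s1 := by
    rw [Fin.card_filter_val_lt]
    omega
  have hcard2 : #({i | s1 ≤ (i : ℕ)} : Finset (Fin k)) = s2 := by
    have h := card_filter_add_card_filter_not (s := (univ : Finset (Fin k))) (· < s1)
    simp only [not_lt, Fin.card_filter_val_lt, card_univ, Fintype.card_fin] at h
    omega
  refine ⟨?_, ?_, mul_harm_sub_sum_Icc_cast_choose_sub_div_cast_choose (by omega) (by omega),
    mul_harm_sub_sum_Icc_cast_choose_sub_div_cast_choose (by omega) (by omega)⟩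
  · rw [file1_eq_span_basisFun, Etime_one_span_basisFun F (card_pos.1 (by omega)), hcard1]
  · rw [file2_eq_span_basisFun, Etime_one_span_basisFun F (card_pos.1 (by omega)), hcard2]

/-- Expected retrieval times of the identity code: `E_i(I_k) = k·H_{s_i}`;
equivalently `k·H_k − ∑_{s=s_i}^{k−1} C(k−s_i, s−s_i)/C(k−1, s) = k·H_{s_i}`. -/
theorem stmt11 (q k s1 s2 : ℕ) (hq : IsPrimePow q)
    (F : Type*) [Field F] [Fintype F] (hF : Fintype.card F = q)
    (hk2 : 2 ≤ k) (hs1 : 1 ≤ s1) (hs2 : 1 ≤ s2) (hk : s1 + s2 = k) :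
    Etime F (1 : Matrix (Fin k) (Fin k) F) (file1 F k s1) = (k : ℝ) * harm s1 ∧
    Etime F (1 : Matrix (Fin k) (Fin k) F) (file2 F k s1) = (k : ℝ) * harm s2 ∧
    (k : ℝ) * harm k -
        ∑ s ∈ Finset.Icc s1 (k - 1), ((k - s1).choose (s - s1) : ℝ) / ((k - 1).choose s : ℝ) =
      (k : ℝ) * harm s1 ∧
    (k : ℝ) * harm k -
        ∑ s ∈ Finset.Icc s2 (k - 1), ((k - s2).choose (s - s2) : ℝ) / ((k - 1).choose s : ℝ) =
      (k : ℝ) * harm s2 :=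
  stmt11_general k s1 s2 F hs1 hs2 hk
end

section
/- Let q be a prime power, let s_1, s_2 ≥ 1 with k = s_1 + s_2, and let n_1, n_2 be integers with n_1 + n_2 = n and n_i ≥ s_i. Let G ∈ F_q^{k×n} be the block-diagonal matrix G = diag(G_1, G_2), where G_i ∈ F_q^{s_i×n_i} has the property that every s_i of its columns are linearly independent (an [n_i, s_i] MDS code). Then for each i ∈ {1,2}, E_i(G) = n·Σ_{j=1}^{s_i} 1/(n_i − j + 1) = n·(H_{n_i} − H_{n_i − s_i}). -/
open Finset

/-!
Since `C(n,s) / C(n-1,s) = n / (n-s)`, the term `n·H_n` equals `∑_{s<n} C(n,s) / C(n-1,s)`, and it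
cancels against the recovering sets: `E(G,V)` is the sum of `1 / C(n-1,|S|)` over the sets `S` of
nodes that do not recover `V`. For `G = diag(G₁, G₂)` a set `S` recovers `F₁` exactly when it
contains at least `s₁` columns of the first block (the MDS property), so the sum factors as
`∑_{t<s₁} C(n₁,t) ∑_{B ⊆ [n₂]} 1 / C(n-1, t+|B|)`. Adding the elements of the second block one at a
time, the inner sum is evaluated by the reciprocal Pascal rule
`1 / C(a+1,t) + 1 / C(a+1,t+1) = (a+2) / ((a+1) C(a,t))`, and each `t` contributes `n / (n₁-t)`.
-/

theorem inv_choose_succ (a t : ℕ) (h : t ≤ a) :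
    (((a + 1).choose t : ℕ) : ℝ)⁻¹ = ((a : ℝ) + 1 - t) / (((a : ℝ) + 1) * a.choose t) := by
  have hc : (a.choose t : ℝ) ≠ 0 := by exact_mod_cast (Nat.choose_pos h).ne'
  have hc' : ((a + 1).choose t : ℝ) ≠ 0 := by exact_mod_cast (Nat.choose_pos (by omega)).ne'
  have key : (a.choose t : ℝ) * (a + 1) = (a + 1).choose t * ((a + 1 - t : ℕ) : ℝ) := by
    exact_mod_cast Nat.choose_mul_succ_eq a t
  rw [Nat.cast_sub (by omega)] at key
  push_cast at key
  field_simp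
  linarith

theorem inv_choose_succ_succ (a t : ℕ) (h : t ≤ a) :
    (((a + 1).choose (t + 1) : ℕ) : ℝ)⁻¹ = ((t : ℝ) + 1) / (((a : ℝ) + 1) * a.choose t) := by
  have hc : (a.choose t : ℝ) ≠ 0 := by exact_mod_cast (Nat.choose_pos h).ne'
  have hc' : ((a + 1).choose (t + 1) : ℝ) ≠ 0 := by exact_mod_cast (Nat.choose_pos (by omega)).ne'
  have key : ((a : ℝ) + 1) * a.choose t = (a + 1).choose (t + 1) * ((t : ℝ) + 1) := by
    exact_mod_cast Nat.add_one_mul_choose_eq a t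
  field_simp
  linarith

theorem sum_powerset_inv_choose {α : Type*} [DecidableEq α] (s : Finset α) {a t : ℕ}
    (h : t ≤ a) :
    ∑ B ∈ s.powerset, (((a + #s).choose (t + #B) : ℕ) : ℝ)⁻¹ =
      ((a : ℝ) + #s + 1) / (((a : ℝ) + 1) * a.choose t) := by
  induction s using Finset.induction_on generalizing a t with
  | empty =>
    have hc : (a.choose t : ℝ) ≠ 0 := by exact_mod_cast (Nat.choose_pos h).ne'
    simp
    field_simp
  | insert x s hx ih =>
    have hc : (a.choose t : ℝ) ≠ 0 := by exact_mod_cast (Nat.choose_pos h).ne'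
    have hins : ∀ B ∈ s.powerset, t + #(insert x B) = t + 1 + #B := fun B hB => by
      rw [card_insert_of_notMem fun hxB => hx (mem_powerset.1 hB hxB)]; ring
    rw [sum_powerset_insert hx, card_insert_of_notMem hx, show a + (#s + 1) = a + 1 + #s by ring,
      sum_congr rfl fun B hB => congrArg (fun u => (((a + 1 + #s).choose u : ℕ) : ℝ)⁻¹) (hins B hB),
      ih (by omega), ih (by omega),
      div_eq_mul_inv, div_eq_mul_inv, mul_inv, mul_inv]
    push_cast
    rw [inv_choose_succ a t h, inv_choose_succ_succ a t h]
    field_simp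
    ring

theorem choose_mul_sum_powerset_inv_choose {α : Type*} [DecidableEq α] (s : Finset α) {a t : ℕ}
    (h : t ≤ a) :
    ((a + 1).choose t : ℝ) * ∑ B ∈ s.powerset, (((a + #s).choose (t + #B) : ℕ) : ℝ)⁻¹ =
      ((a : ℝ) + 1 + #s) / ((a : ℝ) + 1 - t) := by
  have hc : (a.choose t : ℝ) ≠ 0 := by exact_mod_cast (Nat.choose_pos h).ne'
  have hinv := inv_choose_succ a t h
  rw [inv_eq_iff_eq_inv, inv_div] at hinv
  rw [sum_powerset_inv_choose s h, hinv]
  field_simp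
  ring

theorem sum_range_choose_div_choose_pred (n : ℕ) :
    ∑ s ∈ range n, ((n.choose s : ℕ) : ℝ) / ((n - 1).choose s : ℕ) = n * harm n := by
  cases n with
  | zero => simp [harm]
  | succ m =>
    have hterm : ∀ s ∈ range (m + 1),
        ((m + 1).choose s : ℝ) / (m.choose s : ℕ) = ((m : ℝ) + 1) / ((m : ℝ) + 1 - s) := by
      intro s hs
      have hs : s ≤ m := Nat.lt_succ_iff.1 (mem_range.1 hs)
      have hc : (m.choose s : ℝ) ≠ 0 := by exact_mod_cast (Nat.choose_pos hs).ne'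
      rw [← inv_inv (((m + 1).choose s : ℕ) : ℝ), inv_choose_succ m s hs]
      field_simp
    rw [Nat.add_sub_cancel, sum_congr rfl hterm, harm, mul_sum, ← sum_range_reflect]
    refine sum_congr rfl fun j hj => ?_
    rw [Nat.cast_sub (by simp at hj; omega)]
    push_cast
    ring_nf

theorem harm_sub_harm_sub {n s : ℕ} (h : s ≤ n) :
    harm n - harm (n - s) = ∑ t ∈ range s, 1 / ((n : ℝ) - t) := by
  obtain ⟨m, rfl⟩ : ∃ m, n = m + s := ⟨n - s, by omega⟩
  rw [Nat.add_sub_cancel, harm, sum_range_add, harm, add_sub_cancel_left, ← sum_range_reflect]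
  refine sum_congr rfl fun j hj => ?_
  have hj := mem_range.1 hj
  rw [Nat.cast_add, Nat.sub_sub, Nat.cast_sub (by omega)]
  push_cast
  ring_nf

theorem sum_Icc_one_div_eq_sum_range (n s : ℕ) :
    ∑ j ∈ Icc 1 s, 1 / ((n : ℝ) - j + 1) = ∑ t ∈ range s, 1 / ((n : ℝ) - t) := by
  rw [← Ico_add_one_right_eq_Icc, sum_Ico_eq_sum_range, Nat.add_sub_cancel]
  refine sum_congr rfl fun t _ => ?_
  push_cast
  ring_nf

theorem sum_filter_card_lt_apply_card {α M : Type*} [Fintype α] [AddCommMonoid M] (c : ℕ)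
    (f : ℕ → M) :
    ∑ A : Finset α with #A < c, f #A = ∑ t ∈ range c, (Fintype.card α).choose t • f t := by
  rw [← sum_fiberwise_of_maps_to (g := card) (t := range c)
    fun A hA => mem_range.2 (mem_filter.1 hA).2]
  refine sum_congr rfl fun t ht => ?_
  rw [sum_congr rfl fun A hA => by rw [(mem_filter.1 hA).2], sum_const, filter_filter]
  congr 1
  rw [← card_univ, ← card_powersetCard, powersetCard_eq_filter, powerset_univ]
  congr 1
  ext A
  simp only [mem_filter, mem_univ, true_and, and_iff_right_iff_imp]
  rintro rfl
  exact mem_range.1 ht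

section ExpectedTime

variable {F : Type*} [Field F] {k n : ℕ} (G : Matrix (Fin k) (Fin n) F)
  (V : Submodule F (Fin k → F))

theorem colSpan_empty : colSpan F G ∅ = ⊥ := by
  simp [colSpan]

theorem colSpan_submatrix {ι κ : Type*} (B : Matrix ι κ F) (e₁ : Fin k → ι) (e₂ : Fin n → κ)
    (S : Finset (Fin n)) :
    colSpan F (B.submatrix e₁ e₂) S =
      (Submodule.span F ((fun j i => B i j) '' (e₂ '' S))).map (LinearMap.funLeft F F e₁) := by
  rw [colSpan, ← Submodule.span_image, Set.image_image, Set.image_image]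
  rfl

open scoped Classical in
theorem alphaCount_add_card_not_le (s : ℕ) :
    alphaCount F G V s + #{S | #S = s ∧ ¬ V ≤ colSpan F G S} = n.choose s := by
  rw [alphaCount, Nat.card_eq_fintype_card, Fintype.card_subtype, ← filter_filter,
    ← filter_filter (fun S : Finset (Fin n) => #S = s), card_filter_add_card_filter_not,
    ← powerset_univ, ← powersetCard_eq_filter, card_powersetCard, card_univ, Fintype.card_fin]

theorem alphaCount_zero (hV : V ≠ ⊥) : alphaCount F G V 0 = 0 := by
  rw [alphaCount, Nat.card_eq_zero]
  left
  refine ⟨fun ⟨S, hS, hle⟩ => hV ?_⟩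
  rw [card_eq_zero.1 hS, colSpan_empty] at hle
  exact le_bot_iff.1 hle

open scoped Classical in
theorem Etime_eq_sum_inv_choose (hV : V ≠ ⊥) (hfull : V ≤ colSpan F G univ) :
    Etime F G V = ∑ S with ¬ V ≤ colSpan F G S, (((n - 1).choose #S : ℕ) : ℝ)⁻¹ := by
  obtain ⟨m, rfl⟩ : ∃ m, n = m + 1 := Nat.exists_eq_add_one.2 <| Nat.pos_of_ne_zero fun hn => by
    subst hn
    exact hV (le_bot_iff.1 (by simpa [colSpan_empty] using hfull))
  have hfiber : ∑ S with ¬ V ≤ colSpan F G S, (((m + 1 - 1).choose #S : ℕ) : ℝ)⁻¹ =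
      ∑ s ∈ range (m + 1), (#{S | #S = s ∧ ¬ V ≤ colSpan F G S} : ℝ) / (m.choose s : ℕ) := by
    rw [Nat.add_sub_cancel, ← sum_fiberwise_of_maps_to (t := range (m + 1)) (g := card)]
    · refine sum_congr rfl fun s _ => ?_
      rw [sum_congr rfl fun S hS => by rw [(mem_filter.1 hS).2], sum_const, filter_filter,
        nsmul_eq_mul, div_eq_mul_inv]
      simp only [and_comm]
    · intro S hS
      simpa using (card_lt_iff_ne_univ S).2 fun hS' => (mem_filter.1 hS).2 (by rwa [hS'])
  have hcompl : ∀ s, (#{S | #S = s ∧ ¬ V ≤ colSpan F G S} : ℝ) =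
      ((m + 1).choose s : ℕ) - alphaCount F G V s := fun s => by
    rw [← alphaCount_add_card_not_le G V s]; push_cast; ring
  have hharm := sum_range_choose_div_choose_pred (m + 1)
  rw [Nat.add_sub_cancel] at hharm
  rw [hfiber, sum_congr rfl fun s _ => by rw [hcompl, sub_div], sum_sub_distrib, hharm, Etime,
    Nat.add_sub_cancel, range_eq_Ico, sum_eq_sum_Ico_succ_bot (Nat.succ_pos m),
    zero_add, Nat.succ_eq_add_one, Ico_add_one_right_eq_Icc, alphaCount_zero G V hV]
  push_cast
  ring

end ExpectedTime

section BlockDiagonal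

variable (F : Type*) [Field F] (ι₁ ι₂ : Type*)

def inlExtend : (ι₁ → F) →ₗ[F] (ι₁ ⊕ ι₂ → F) :=
  (LinearEquiv.sumArrowLequivProdArrow ι₁ ι₂ F F).symm.toLinearMap ∘ₗ LinearMap.inl F _ _

variable {F ι₁ ι₂}

@[simp] theorem inlExtend_apply (v : ι₁ → F) : inlExtend F ι₁ ι₂ v = Sum.elim v 0 := rfl

theorem range_inlExtend_eq_span_single [Fintype ι₁] [DecidableEq ι₁] [DecidableEq ι₂] :
    LinearMap.range (inlExtend F ι₁ ι₂) =
      Submodule.span F (Set.range fun a => Pi.single (Sum.inl a) (1 : F)) := by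
  rw [LinearMap.range_eq_map, ← (Pi.basisFun F ι₁).span_eq, Submodule.map_span, ← Set.range_comp]
  refine congrArg _ (congrArg Set.range (funext fun a => ?_))
  ext (i | i) <;> simp [Pi.single_apply]

theorem span_single_eq_map_range_inlExtend [Fintype ι₁] [DecidableEq ι₁] [DecidableEq ι₂]
    {ι : Type*} [DecidableEq ι] (e : ι ≃ ι₁ ⊕ ι₂) (P : ι → Prop) (hP : ∀ i, P i ↔ (e i).isLeft) :
    Submodule.span F {v | ∃ i, P i ∧ v = Pi.single i 1} =
      (LinearMap.range (inlExtend F ι₁ ι₂)).map (LinearMap.funLeft F F e) := by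
  rw [range_inlExtend_eq_span_single, Submodule.map_span, ← Set.range_comp]
  have hsingle : ∀ a, LinearMap.funLeft F F e (Pi.single (Sum.inl a) 1) =
      Pi.single (e.symm (Sum.inl a)) 1 := fun a => Pi.single_comp_equiv e _ _
  congr 1
  ext v
  simp only [Set.mem_ofPred_eq, Set.mem_range, Function.comp_apply, hsingle]
  constructor
  · rintro ⟨i, hi, rfl⟩
    obtain ⟨a, ha⟩ := Sum.isLeft_iff.1 ((hP i).1 hi)
    exact ⟨a, by rw [← ha, e.symm_apply_apply]⟩
  · rintro ⟨a, rfl⟩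
    exact ⟨e.symm (Sum.inl a), (hP _).2 (by simp), rfl⟩

variable {κ₁ κ₂ : Type*} (G₁ : Matrix ι₁ κ₁ F) (G₂ : Matrix ι₂ κ₂ F)

theorem range_inlExtend_le_span_fromBlocks_iff (U : Finset (κ₁ ⊕ κ₂)) :
    LinearMap.range (inlExtend F ι₁ ι₂) ≤
        Submodule.span F ((fun j i => Matrix.fromBlocks G₁ 0 0 G₂ i j) '' U) ↔
      Submodule.span F ((fun j i => G₁ i j) '' U.toLeft) = ⊤ := by
  have hcol : ∀ j, inlExtend F ι₁ ι₂ (fun i => G₁ i j) =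
      fun i => Matrix.fromBlocks G₁ 0 0 G₂ i (Sum.inl j) := fun j => by
    funext i; cases i <;> rfl
  constructor
  · intro h
    rw [eq_top_iff]
    rintro v -
    have := Submodule.mem_map_of_mem (f := LinearMap.funLeft F F Sum.inl) (h ⟨v, rfl⟩)
    rw [Submodule.map_span] at this
    refine Submodule.span_le.2 ?_ this
    rintro _ ⟨_, ⟨j | j, hj, rfl⟩, rfl⟩
    · exact Submodule.subset_span ⟨j, mem_toLeft.2 hj, rfl⟩
    · exact (Submodule.span F _).zero_mem
  · intro h
    rintro _ ⟨v, rfl⟩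
    have hv : v ∈ Submodule.span F ((fun j i => G₁ i j) '' U.toLeft) := h ▸ Submodule.mem_top
    have := Submodule.mem_map_of_mem (f := inlExtend F ι₁ ι₂) hv
    rw [Submodule.map_span] at this
    refine Submodule.span_mono ?_ this
    rintro _ ⟨_, ⟨j, hj, rfl⟩, rfl⟩
    exact ⟨Sum.inl j, mem_toLeft.1 hj, (hcol j).symm⟩

theorem span_cols_eq_top_iff_card_le [Fintype ι₁]
    (hMDS : ∀ A : Finset κ₁, #A = Fintype.card ι₁ →
      LinearIndependent F (fun j : A => fun i => G₁ i j)) (A : Finset κ₁) :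
    Submodule.span F ((fun j i => G₁ i j) '' A) = ⊤ ↔ Fintype.card ι₁ ≤ #A := by
  classical
  constructor
  · intro h
    have hle := finrank_span_finset_le_card (R := F) (A.image fun j i => G₁ i j)
    rw [coe_image, Set.finrank, h, finrank_top, Module.finrank_fintype_fun_eq_card] at hle
    exact hle.trans card_image_le
  · intro h
    obtain ⟨T, hTA, hT⟩ := exists_subset_card_eq h
    refine eq_top_iff.2 ((hMDS T hT).span_eq_top_of_card_eq_finrank' ?_ ▸ Submodule.span_mono ?_)
    · rw [Fintype.card_coe, hT, Module.finrank_fintype_fun_eq_card]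
    · rintro _ ⟨j, rfl⟩
      exact ⟨j, hTA j.2, rfl⟩

theorem Etime_fromBlocks [Fintype ι₁] [Nonempty ι₁] [Fintype κ₁] [Fintype κ₂] {k n : ℕ}
    (hMDS : ∀ A : Finset κ₁, #A = Fintype.card ι₁ →
      LinearIndependent F (fun j : A => fun i => G₁ i j))
    (hcard : Fintype.card ι₁ ≤ Fintype.card κ₁) (e₁ : Fin k ≃ ι₁ ⊕ ι₂) (e₂ : Fin n ≃ κ₁ ⊕ κ₂) :
    Etime F ((Matrix.fromBlocks G₁ 0 0 G₂).submatrix e₁ e₂)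
        ((LinearMap.range (inlExtend F ι₁ ι₂)).map (LinearMap.funLeft F F e₁)) =
      n * ∑ t ∈ range (Fintype.card ι₁), 1 / ((Fintype.card κ₁ : ℝ) - t) := by
  classical
  set V := (LinearMap.range (inlExtend F ι₁ ι₂)).map (LinearMap.funLeft F F e₁)
  set c := Fintype.card ι₁
  have hle : ∀ S, V ≤ colSpan F ((Matrix.fromBlocks G₁ 0 0 G₂).submatrix e₁ e₂) S ↔
      c ≤ #(S.map e₂.toEmbedding).toLeft := fun S => by
    rw [colSpan_submatrix, Submodule.map_le_map_iff_of_injective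
      (LinearMap.funLeft_injective_of_surjective _ _ _ e₁.surjective), ← Equiv.coe_toEmbedding,
      ← coe_map]
    exact (range_inlExtend_le_span_fromBlocks_iff G₁ G₂ _).trans
      (span_cols_eq_top_iff_card_le G₁ hMDS _)
  have hV : V ≠ ⊥ := fun h => by
    simpa [c] using ((hle ∅).1 (h ▸ bot_le)).trans card_toLeft_le
  have hfull : V ≤ colSpan F ((Matrix.fromBlocks G₁ 0 0 G₂).submatrix e₁ e₂) univ :=
    (hle univ).2 (by simpa using hcard)
  obtain ⟨a, ha⟩ : ∃ a, Fintype.card κ₁ = a + 1 :=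
    Nat.exists_eq_add_one.2 (Fintype.card_pos.trans_le hcard)
  have hn : n = a + 1 + Fintype.card κ₂ := by
    simpa [ha] using Fintype.card_congr e₂
  rw [Etime_eq_sum_inv_choose _ _ hV hfull]
  calc ∑ S with ¬ V ≤ colSpan F ((Matrix.fromBlocks G₁ 0 0 G₂).submatrix e₁ e₂) S,
        (((n - 1).choose #S : ℕ) : ℝ)⁻¹
      = ∑ U : Finset (κ₁ ⊕ κ₂) with #U.toLeft < c, (((n - 1).choose #U : ℕ) : ℝ)⁻¹ :=
        sum_equiv (Equiv.finsetCongr e₂) (by simp [hle]) (by simp)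
    _ = ∑ p : Finset κ₁ × Finset κ₂ with #p.1 < c, (((n - 1).choose (#p.1 + #p.2) : ℕ) : ℝ)⁻¹ :=
        sum_equiv sumEquiv.toEquiv (by simp) (by simp [card_toLeft_add_card_toRight])
    _ = ∑ A : Finset κ₁ with #A < c, ∑ B : Finset κ₂,
          (((a + #(univ : Finset κ₂)).choose (#A + #B) : ℕ) : ℝ)⁻¹ := by
        rw [← univ_product_univ, filter_product_left (fun A => #A < c), sum_product, card_univ, hn,
          show a + 1 + Fintype.card κ₂ - 1 = a + Fintype.card κ₂ by omega]
    _ = ∑ t ∈ range c, ((a : ℝ) + 1 + Fintype.card κ₂) / ((a : ℝ) + 1 - t) := by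
        rw [sum_filter_card_lt_apply_card c (fun t => ∑ B : Finset κ₂,
          (((a + #(univ : Finset κ₂)).choose (t + #B) : ℕ) : ℝ)⁻¹)]
        refine sum_congr rfl fun t ht => ?_
        rw [ha, nsmul_eq_mul, ← powerset_univ,
          choose_mul_sum_powerset_inv_choose _ (by have := mem_range.1 ht; omega), card_univ]
    _ = n * ∑ t ∈ range c, 1 / ((Fintype.card κ₁ : ℝ) - t) := by
        rw [mul_sum, hn, ha]
        push_cast
        simp_rw [mul_one_div]

end BlockDiagonal

theorem isLeft_finSumFinEquiv_symm {m n : ℕ} (i : Fin (m + n)) :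
    (finSumFinEquiv.symm i).isLeft ↔ (i : ℕ) < m := by
  induction i using Fin.addCases <;> simp

section FileDedicated

variable {F : Type*} [Field F]

theorem file1_eq_map {k s1 s2 : ℕ} (hk : k = s1 + s2) :
    file1 F k s1 = (LinearMap.range (inlExtend F (Fin s1) (Fin s2))).map
      (LinearMap.funLeft F F ((finCongr hk).trans finSumFinEquiv.symm)) :=
  span_single_eq_map_range_inlExtend _ _ fun i => by simp [isLeft_finSumFinEquiv_symm]

theorem file2_eq_map {k s1 s2 : ℕ} (hk : k = s1 + s2) :
    file2 F k s1 = (LinearMap.range (inlExtend F (Fin s2) (Fin s1))).map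
      (LinearMap.funLeft F F (((finCongr hk).trans finSumFinEquiv.symm).trans (Equiv.sumComm _ _))) :=
  span_single_eq_map_range_inlExtend _ _ fun i => by
    simp [← Sum.not_isLeft, isLeft_finSumFinEquiv_symm]

theorem Etime_fromBlocks_finSum {s1 s2 n1 n2 k n : ℕ} (hs1 : 1 ≤ s1) (hn1 : s1 ≤ n1)
    (G1 : Matrix (Fin s1) (Fin n1) F) (G2 : Matrix (Fin s2) (Fin n2) F)
    (hG1 : ∀ S : Finset (Fin n1), S.card = s1 →
      LinearIndependent F (fun j : {x : Fin n1 // x ∈ S} => fun i => G1 i j.1))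
    (e₁ : Fin k ≃ Fin s1 ⊕ Fin s2) (e₂ : Fin n ≃ Fin n1 ⊕ Fin n2) :
    Etime F ((Matrix.fromBlocks G1 0 0 G2).submatrix e₁ e₂)
        ((LinearMap.range (inlExtend F (Fin s1) (Fin s2))).map (LinearMap.funLeft F F e₁)) =
      n * ∑ t ∈ range s1, 1 / ((n1 : ℝ) - t) := by
  have : Nonempty (Fin s1) := ⟨⟨0, hs1⟩⟩
  simpa using Etime_fromBlocks G1 G2 (fun A hA => hG1 A (by simpa using hA)) (by simpa using hn1)
    e₁ e₂

end FileDedicated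

theorem stmt14_general (s1 s2 n1 n2 k n : ℕ)
    (F : Type*) [Field F]
    (hs1 : 1 ≤ s1) (hs2 : 1 ≤ s2) (hk : k = s1 + s2) (hn : n = n1 + n2)
    (hn1 : s1 ≤ n1) (hn2 : s2 ≤ n2)
    (G1 : Matrix (Fin s1) (Fin n1) F) (G2 : Matrix (Fin s2) (Fin n2) F)
    (hG1 : ∀ S : Finset (Fin n1), S.card = s1 →
      LinearIndependent F (fun j : {x : Fin n1 // x ∈ S} => fun i => G1 i j.1))
    (hG2 : ∀ S : Finset (Fin n2), S.card = s2 →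
      LinearIndependent F (fun j : {x : Fin n2 // x ∈ S} => fun i => G2 i j.1))
    (G : Matrix (Fin k) (Fin n) F)
    (hG : G = (Matrix.fromBlocks G1 0 0 G2).submatrix
      (finSumFinEquiv.symm ∘ Fin.cast hk) (finSumFinEquiv.symm ∘ Fin.cast hn)) :
    (Etime F G (file1 F k s1) =
        (n : ℝ) * ∑ j ∈ Finset.Icc 1 s1, (1 : ℝ) / ((n1 : ℝ) - (j : ℝ) + 1) ∧
      Etime F G (file1 F k s1) = (n : ℝ) * (harm n1 - harm (n1 - s1))) ∧
    (Etime F G (file2 F k s1) =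
        (n : ℝ) * ∑ j ∈ Finset.Icc 1 s2, (1 : ℝ) / ((n2 : ℝ) - (j : ℝ) + 1) ∧
      Etime F G (file2 F k s1) = (n : ℝ) * (harm n2 - harm (n2 - s2))) := by
  set e₁ : Fin k ≃ Fin s1 ⊕ Fin s2 := (finCongr hk).trans finSumFinEquiv.symm
  set e₂ : Fin n ≃ Fin n1 ⊕ Fin n2 := (finCongr hn).trans finSumFinEquiv.symm
  have hG₁ : G = (Matrix.fromBlocks G1 0 0 G2).submatrix e₁ e₂ := hG
  have hG₂ : G = (Matrix.fromBlocks G2 0 0 G1).submatrix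
      (e₁.trans (Equiv.sumComm _ _)) (e₂.trans (Equiv.sumComm _ _)) := by
    rw [hG₁, ← Matrix.fromBlocks_submatrix_sum_swap_sum_swap (A := G2) (D := G1),
      Matrix.submatrix_submatrix]
    rfl
  have h₁ := Etime_fromBlocks_finSum hs1 hn1 G1 G2 hG1 e₁ e₂
  have h₂ := Etime_fromBlocks_finSum hs2 hn2 G2 G1 hG2 (e₁.trans (Equiv.sumComm _ _))
    (e₂.trans (Equiv.sumComm _ _))
  rw [← hG₁, ← file1_eq_map hk] at h₁
  rw [← hG₂, ← file2_eq_map hk] at h₂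
  rw [h₁, h₂, sum_Icc_one_div_eq_sum_range, sum_Icc_one_div_eq_sum_range, harm_sub_harm_sub hn1,
    harm_sub_harm_sub hn2]
  exact ⟨⟨rfl, rfl⟩, rfl, rfl⟩

/-- Expected retrieval times of the file-dedicated MDS code
`G = diag(G₁, G₂)` with allocation `(n₁, n₂)`:
`E_i(G) = n·∑_{j=1}^{s_i} 1/(n_i − j + 1) = n·(H_{n_i} − H_{n_i − s_i})`. -/
theorem stmt14 (q s1 s2 n1 n2 k n : ℕ) (hq : IsPrimePow q)
    (F : Type*) [Field F] [Fintype F] (hF : Fintype.card F = q)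
    (hs1 : 1 ≤ s1) (hs2 : 1 ≤ s2) (hk : k = s1 + s2) (hn : n = n1 + n2)
    (hn1 : s1 ≤ n1) (hn2 : s2 ≤ n2)
    (G1 : Matrix (Fin s1) (Fin n1) F) (G2 : Matrix (Fin s2) (Fin n2) F)
    (hG1 : ∀ S : Finset (Fin n1), S.card = s1 →
      LinearIndependent F (fun j : {x : Fin n1 // x ∈ S} => fun i => G1 i j.1))
    (hG2 : ∀ S : Finset (Fin n2), S.card = s2 →
      LinearIndependent F (fun j : {x : Fin n2 // x ∈ S} => fun i => G2 i j.1))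
    (G : Matrix (Fin k) (Fin n) F)
    (hG : G = (Matrix.fromBlocks G1 0 0 G2).submatrix
      (finSumFinEquiv.symm ∘ Fin.cast hk) (finSumFinEquiv.symm ∘ Fin.cast hn)) :
    (Etime F G (file1 F k s1) =
        (n : ℝ) * ∑ j ∈ Finset.Icc 1 s1, (1 : ℝ) / ((n1 : ℝ) - (j : ℝ) + 1) ∧
      Etime F G (file1 F k s1) = (n : ℝ) * (harm n1 - harm (n1 - s1))) ∧
    (Etime F G (file2 F k s1) =
        (n : ℝ) * ∑ j ∈ Finset.Icc 1 s2, (1 : ℝ) / ((n2 : ℝ) - (j : ℝ) + 1) ∧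
      Etime F G (file2 F k s1) = (n : ℝ) * (harm n2 - harm (n2 - s2))) :=
  stmt14_general s1 s2 n1 n2 k n F hs1 hs2 hk hn hn1 hn2 G1 G2 hG1 hG2 G hG
end

section
/- Let n, n_i, s_i be positive integers with s_i ≤ n_i ≤ n, and let s be an integer with s ≥ s_i. Then Σ_{j=s_i}^{min(s, n_i)} C(n_i, j)·C(n−n_i, s−j) ≥ C(n−s_i, s−s_i), where C(a,b) is the binomial coefficient. -/
lemma choose_add_le (a b c : ℕ) : a.choose b ≤ (a + c).choose (b + c) := by
  induction c with
  | zero => simp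
  | succ c ih =>
    calc a.choose b ≤ (a + c).choose (b + c) := ih
      _ ≤ (a + c + 1).choose (b + c + 1) := by
          rw [Nat.choose_succ_succ]; exact Nat.le_add_right _ _

/-- Subset-counting inequality: for `1 ≤ s_i ≤ n_i ≤ n` and `s ≥ s_i`,
`∑_{j=s_i}^{min(s,n_i)} C(n_i, j)·C(n−n_i, s−j) ≥ C(n−s_i, s−s_i)`. -/
theorem stmt17 (n ni si s : ℕ) (hsi : 1 ≤ si) (h1 : si ≤ ni) (h2 : ni ≤ n) (hs : si ≤ s) :
    (n - si).choose (s - si) ≤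
      ∑ j ∈ Finset.Icc si (min s ni), ni.choose j * (n - ni).choose (s - j) := by
  have hab : n - si = (ni - si) + (n - ni) := by omega
  rw [hab, Nat.add_choose_eq, Finset.Nat.sum_antidiagonal_eq_sum_range_succ_mk]
  -- LHS is now ∑ i ∈ range (s - si + 1), (ni-si).choose i * (n-ni).choose (s-si-i)
  have hrhs : ∑ j ∈ Finset.Icc si (min s ni), ni.choose j * (n - ni).choose (s - j)
      = ∑ i ∈ Finset.range (min s ni + 1 - si),
          ni.choose (si + i) * (n - ni).choose (s - (si + i)) := by
    rw [← Finset.Ico_add_one_right_eq_Icc, Finset.sum_Ico_eq_sum_range]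
  rw [hrhs]
  have hsub : Finset.range (min s ni + 1 - si) ⊆ Finset.range (s - si + 1) := by
    apply Finset.range_subset_range.mpr; omega
  have htrunc : ∑ i ∈ Finset.range (s - si + 1),
        (ni - si).choose i * (n - ni).choose (s - si - i)
      = ∑ i ∈ Finset.range (min s ni + 1 - si),
        (ni - si).choose i * (n - ni).choose (s - si - i) := by
    symm
    apply Finset.sum_subset hsub
    intro i hi hni
    simp only [Finset.mem_range] at hi hni
    have : ni - si < i := by omega
    rw [Nat.choose_eq_zero_of_lt this, Nat.zero_mul]
  rw [htrunc]
  apply Finset.sum_le_sum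
  intro i hi
  have h3 : (ni - si).choose i ≤ ni.choose (si + i) := by
    have := choose_add_le (ni - si) i si
    rwa [Nat.sub_add_cancel h1, Nat.add_comm i si] at this
  have h4 : s - si - i = s - (si + i) := by omega
  rw [h4] at *
  exact Nat.mul_le_mul_right _ h3
end
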